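/- arXiv:2103.07827 — 2 statements merged into one kernel-verified Lean document; each statement's English description precedes it below -/
import Mathlib

section
/- Gentle Measurement identity: if ρ is a density matrix and A is an orthogonal projector with tr(ρA) > 0, then F(ρ, ρ|A) = tr(ρA), where ρ|A = AρA / tr(ρA). -/
open Matrix ComplexOrder

/-- The positive semidefinite square root of a positive semidefinite matrix, with the
definition `Matrix.PosSemidef.sqrt` had in Mathlib (Dec 2024); it has since been removed. -/
noncomputable def Matrix.PosSemidef.sqrt {n 𝕜 : Type*} [Fintype n] [RCLike 𝕜] [DecidableEq n]
    {A : Matrix n n 𝕜} (hA : A.PosSemidef) : Matrix n n 𝕜 :=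
  hA.1.eigenvectorUnitary.1 * diagonal ((↑) ∘ (√·) ∘ hA.1.eigenvalues) *
  (star hA.1.eigenvectorUnitary : Matrix n n 𝕜)

/-- The Schatten 1-norm (trace norm): ‖M‖₁ = tr √(MᴴM). -/
noncomputable def traceNorm {n m : Type*} [Fintype n] [Fintype m] [DecidableEq m]
    (M : Matrix n m ℂ) : ℝ :=
  ((Matrix.posSemidef_conjTranspose_mul_self M).sqrt.trace).re

/-!
Write `t = tr(ρA)`, `σ = t⁻¹ • AρA` and `r = √σ`. Since `A σ = σ`, the range of `r` lies in that
of `A`, so `r A = r` and `(√ρ r)ᴴ (√ρ r) = r ρ r = r (AρA) r = t σ²`. Hence `√t σ` is the square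
root of `(√ρ r)ᴴ (√ρ r)`, whose trace is `√t tr σ = √t`.
-/

section

variable {n 𝕜 : Type*} [Fintype n] [RCLike 𝕜]

lemma Matrix.trace_mul_mul_of_isIdempotentElem {P : Matrix n n 𝕜} (hP : IsIdempotentElem P)
    (M : Matrix n n 𝕜) : (P * M * P).trace = (M * P).trace := by
  rw [trace_mul_comm, ← Matrix.mul_assoc, hP.eq, trace_mul_comm]

lemma Matrix.PosSemidef.trace_mul_nonneg_of_isIdempotentElem {A P : Matrix n n 𝕜}
    (hA : A.PosSemidef) (hP : P.IsHermitian) (hP2 : IsIdempotentElem P) : 0 ≤ (A * P).trace := by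
  have h := (hA.mul_mul_conjTranspose_same P).trace_nonneg
  rwa [hP.eq, trace_mul_mul_of_isIdempotentElem hP2] at h

lemma Matrix.IsHermitian.mul_eq_self_of_mul_mul_self_eq [DecidableEq n] {r P : Matrix n n 𝕜}
    (hr : r.IsHermitian) (hP : P.IsHermitian) (hP2 : IsIdempotentElem P)
    (h : P * (r * r) = r * r) : r * P = r := by
  have hPc : (1 - P) * P = 0 := by rw [Matrix.sub_mul, Matrix.one_mul, hP2.eq, sub_self]
  have hzero : (r * (1 - P))ᴴ * (r * (1 - P)) = 0 := by
    rw [conjTranspose_mul, hr.eq, conjTranspose_sub, conjTranspose_one, hP.eq]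
    calc (1 - P) * r * (r * (1 - P)) = (1 - P) * (P * (r * r)) * (1 - P) := by
          rw [h]; noncomm_ring
      _ = 0 := by rw [← Matrix.mul_assoc, hPc, Matrix.zero_mul, Matrix.zero_mul]
  rw [conjTranspose_mul_self_eq_zero, Matrix.mul_sub, Matrix.mul_one, sub_eq_zero] at hzero
  exact hzero.symm

end

namespace Matrix.PosSemidef

open scoped MatrixOrder

variable {n 𝕜 : Type*} [Fintype n] [RCLike 𝕜] [DecidableEq n] {A : Matrix n n 𝕜}

lemma sqrt_eq_cfcSqrt (hA : A.PosSemidef) : hA.sqrt = CFC.sqrt A := by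
  rw [CFC.sqrt_eq_cfc, cfc_nnreal_eq_real _ A, hA.1.cfc_eq]
  simp only [IsHermitian.cfc, Matrix.PosSemidef.sqrt, Unitary.conjStarAlgAut_apply]
  congr 3
  funext i
  simp [max_eq_left (hA.eigenvalues_nonneg i)]

lemma posSemidef_sqrt (hA : A.PosSemidef) : hA.sqrt.PosSemidef := by
  rw [hA.sqrt_eq_cfcSqrt]
  exact nonneg_iff_posSemidef.mp (CFC.sqrt_nonneg A)

lemma sqrt_mul_self (hA : A.PosSemidef) : hA.sqrt * hA.sqrt = A := by
  rw [hA.sqrt_eq_cfcSqrt]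
  exact CFC.sqrt_mul_sqrt_self A (nonneg_iff_posSemidef.mpr hA)

lemma sqrt_eq_of_mul_self_eq (hA : A.PosSemidef) {B : Matrix n n 𝕜} (hB : B.PosSemidef)
    (hBA : B * B = A) : hA.sqrt = B := by
  rw [hA.sqrt_eq_cfcSqrt]
  exact CFC.sqrt_unique hBA (nonneg_iff_posSemidef.mpr hB)

lemma conjTranspose_sqrt_mul_mul_sqrt_mul (hA : A.PosSemidef) {r : Matrix n n 𝕜}
    (hr : r.IsHermitian) : (hA.sqrt * r)ᴴ * (hA.sqrt * r) = r * A * r := by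
  rw [conjTranspose_mul, hr.eq, hA.posSemidef_sqrt.1.eq, Matrix.mul_assoc,
    ← Matrix.mul_assoc hA.sqrt, hA.sqrt_mul_self, Matrix.mul_assoc]

end Matrix.PosSemidef

lemma traceNorm_eq_of_conjTranspose_mul_self_eq_smul {n m : Type*} [Fintype n] [Fintype m]
    [DecidableEq m] (M : Matrix n m ℂ) {σ : Matrix m m ℂ} (hσ : σ.PosSemidef) {c : ℝ} (hc : 0 ≤ c)
    (hM : Mᴴ * M = (c : ℂ) • (σ * σ)) : traceNorm M = √c * σ.trace.re := by
  have hcσ : ((√c : ℂ) • σ).PosSemidef := hσ.smul (Complex.zero_le_real.mpr (Real.sqrt_nonneg c))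
  have hsq : ((√c : ℂ) • σ) * ((√c : ℂ) • σ) = Mᴴ * M := by
    rw [hM, smul_mul_smul_comm, ← Complex.ofReal_mul, Real.mul_self_sqrt hc]
  rw [traceNorm, PosSemidef.sqrt_eq_of_mul_self_eq _ hcσ hsq, trace_smul, smul_eq_mul,
    Complex.re_ofReal_mul]

theorem fidelity_cond_self_general {d : ℕ} (ρ A : Matrix (Fin d) (Fin d) ℂ)
    (hρ : ρ.PosSemidef)
    (hA : A.IsHermitian) (hA2 : A * A = A)
    (hpos : 0 < ((ρ * A).trace).re)
    (hcond : (((ρ * A).trace)⁻¹ • (A * ρ * A)).PosSemidef) :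
    traceNorm (hρ.sqrt * hcond.sqrt) ^ 2 = ((ρ * A).trace).re := by
  set t := (ρ * A).trace
  set σ := t⁻¹ • (A * ρ * A)
  set r := hcond.sqrt
  have ht_real : t = t.re := Complex.eq_re_of_ofReal_le (r := 0) <| by
    simpa using hρ.trace_mul_nonneg_of_isIdempotentElem hA hA2
  have ht0 : t ≠ 0 := fun h => hpos.ne' (by simp [h])
  have hAρA : A * ρ * A = t • σ := by rw [smul_smul, mul_inv_cancel₀ ht0, one_smul]
  have hσ_trace : σ.trace = 1 := by
    rw [trace_smul, trace_mul_mul_of_isIdempotentElem hA2, smul_eq_mul, inv_mul_cancel₀ ht0]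
  have hr : r.IsHermitian := hcond.posSemidef_sqrt.1
  have hσ : r * r = σ := hcond.sqrt_mul_self
  have hrA : r * A = r := by
    refine hr.mul_eq_self_of_mul_mul_self_eq hA hA2 ?_
    rw [hσ, Matrix.mul_smul, ← Matrix.mul_assoc, ← Matrix.mul_assoc, hA2]
  have hAr : A * r = r := by
    simpa only [conjTranspose_mul, hr.eq, hA.eq] using congrArg conjTranspose hrA
  have hsr : (hρ.sqrt * r)ᴴ * (hρ.sqrt * r) = (t.re : ℂ) • (σ * σ) :=
    calc (hρ.sqrt * r)ᴴ * (hρ.sqrt * r) = (r * A) * ρ * (A * r) := by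
          rw [hρ.conjTranspose_sqrt_mul_mul_sqrt_mul hr, hrA, hAr]
      _ = r * (t • σ) * r := by rw [← hAρA]; noncomm_ring
      _ = (t.re : ℂ) • (σ * σ) := by
          rw [← ht_real, ← hσ, Matrix.mul_smul, Matrix.smul_mul]; noncomm_ring
  rw [traceNorm_eq_of_conjTranspose_mul_self_eq_smul _ hcond hpos.le hsr, hσ_trace, Complex.one_re,
    mul_one, Real.sq_sqrt hpos.le]

/-- Gentle Measurement identity: F(ρ, ρ|A) = tr(ρA) for a projector A. -/
theorem fidelity_cond_self {d : ℕ} (ρ A : Matrix (Fin d) (Fin d) ℂ)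
    (hρ : ρ.PosSemidef) (hρ1 : ρ.trace = 1)
    (hA : A.IsHermitian) (hA2 : A * A = A)
    (hpos : 0 < ((ρ * A).trace).re)
    (hcond : (((ρ * A).trace)⁻¹ • (A * ρ * A)).PosSemidef) :
    traceNorm (hρ.sqrt * hcond.sqrt) ^ 2 = ((ρ * A).trace).re :=
  fidelity_cond_self_general ρ A hρ hA hA2 hpos hcond
end

section
/- Gao's Quantum Union Bound: with the sequential measurement setup, if Loss = Σ_t ε_t ≤ 1 then Fail ≤ 4·Loss/(1+Loss)² ≤ 4·Loss. -/
open Matrix ComplexOrder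

/-!
Write `ρ = v vᴴ`. In the Frobenius inner product `⟪X, Y⟫ = tr (Xᴴ Y)` the matrix `v` is a unit
vector `ψ` and left multiplication by each `A t` is an orthogonal projection, so it suffices to
treat a pure state. Along `x₀ = ψ`, `x_{t+1} = P_t x_t`, and for any `c > 0`, the potential
`2 Re ⟪ψ, x⟫ - c ‖x‖²` drops by at most `ε_t / c` per step: by Pythagoras the drop is
`2 Re ⟪a, b⟫ - c ‖b‖²` with `a = ψ - P_t ψ`, `b = x_t - P_t x_t`, and
`2 Re ⟪a, b⟫ ≤ ‖a‖² / c + c ‖b‖²`.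
Bounding `Re ⟪ψ, x_m⟫ ≤ s := ‖x_m‖` by Cauchy–Schwarz leaves a quadratic inequality in `s`; for
`c = (1 + Loss) / 2` its roots are `(1 ± c) / c`, so `s ≥ (1 - Loss) / (1 + Loss)`, and
`Fail = 1 - s²` is at most `4 Loss / (1 + Loss)²`.
-/

open RCLike
open scoped InnerProductSpace

namespace LinearMap.IsSymmetricProjection

variable {𝕜 E : Type*} [RCLike 𝕜] [NormedAddCommGroup E] [InnerProductSpace 𝕜 E]
  {P : E →ₗ[𝕜] E}

lemma apply_apply (hP : P.IsSymmetricProjection) (x : E) : P (P x) = P x :=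
  congr($(hP.isIdempotentElem.eq) x)

lemma inner_sub_apply_sub_apply (hP : P.IsSymmetricProjection) (x y : E) :
    ⟪x - P x, y - P y⟫_𝕜 = ⟪x, y⟫_𝕜 - ⟪x, P y⟫_𝕜 := by
  have hPx : ⟪P x, y - P y⟫_𝕜 = 0 := by
    rw [hP.isSymmetric, map_sub, hP.apply_apply, sub_self, inner_zero_right]
  rw [inner_sub_left, hPx, sub_zero, inner_sub_right]

lemma norm_apply_sq (hP : P.IsSymmetricProjection) (x : E) :
    ‖P x‖ ^ 2 = ‖x‖ ^ 2 - ‖x - P x‖ ^ 2 := by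
  have hPP : ⟪P x, P x⟫_𝕜 = ⟪x, P x⟫_𝕜 := by rw [hP.isSymmetric, hP.apply_apply]
  have h := congr_arg re (hP.inner_sub_apply_sub_apply x x)
  rw [map_sub, ← hPP] at h
  simp only [inner_self_eq_norm_sq] at h
  linarith

end LinearMap.IsSymmetricProjection

section PureState

variable {𝕜 E : Type*} [RCLike 𝕜] [NormedAddCommGroup E] [InnerProductSpace 𝕜 E]

lemma two_mul_re_inner_le (x y : E) {c : ℝ} (hc : 0 < c) :
    2 * re ⟪x, y⟫_𝕜 ≤ ‖x‖ ^ 2 / c + c * ‖y‖ ^ 2 := by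
  rw [div_add' _ _ _ hc.ne', le_div_iff₀ hc]
  nlinarith [re_inner_le_norm (𝕜 := 𝕜) x y, sq_nonneg (‖x‖ - c * ‖y‖)]

noncomputable def measurementLoss (ψ : E) (l : List (E →ₗ[𝕜] E)) : ℝ :=
  (l.map fun P => ‖ψ - P ψ‖ ^ 2).sum

lemma measurementLoss_nonneg (ψ : E) (l : List (E →ₗ[𝕜] E)) : 0 ≤ measurementLoss ψ l :=
  List.sum_nonneg fun _ h => by
    obtain ⟨P, -, rfl⟩ := List.mem_map.mp h
    positivity

lemma gao_potential_le (ψ : E) (hψ : ‖ψ‖ = 1) {c : ℝ} (hc : 0 < c) (l : List (E →ₗ[𝕜] E))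
    (hl : ∀ P ∈ l, P.IsSymmetricProjection) :
    2 - c - measurementLoss ψ l / c ≤
      2 * re ⟪ψ, l.reverse.prod ψ⟫_𝕜 - c * ‖l.reverse.prod ψ‖ ^ 2 := by
  induction l using List.reverseRecOn with
  | nil => simp [measurementLoss, hψ]
  | append_singleton l P ih =>
    have hP := hl P (by simp)
    set x := l.reverse.prod ψ
    have hstep : re ⟪ψ, P x⟫_𝕜 = re ⟪ψ, x⟫_𝕜 - re ⟪ψ - P ψ, x - P x⟫_𝕜 := by
      rw [hP.inner_sub_apply_sub_apply, map_sub]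
      ring
    have hyoung := two_mul_re_inner_le (𝕜 := 𝕜) (ψ - P ψ) (x - P x) hc
    have ih := ih fun Q hQ => hl Q (by simp [hQ])
    simp only [measurementLoss, List.reverse_append, List.reverse_singleton,
      List.singleton_append, List.prod_cons, Module.End.mul_apply, List.map_append,
      List.sum_append, List.map_singleton, List.sum_singleton, add_div] at ih ⊢
    rw [hstep, hP.norm_apply_sq]
    linarith

lemma one_sub_sq_le_of_le_two_mul_sub {L s : ℝ} (hL0 : 0 ≤ L) (hL1 : L ≤ 1)
    (h : 2 - (1 + L) / 2 - L / ((1 + L) / 2) ≤ 2 * s - (1 + L) / 2 * s ^ 2) :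
    1 - s ^ 2 ≤ 4 * L / (1 + L) ^ 2 := by
  have hpos : 0 < 1 + L := by linarith
  have hquad : ((1 + L) * s - 2) ^ 2 ≤ (1 + L) ^ 2 := by
    field_simp at h
    nlinarith
  have hs : 1 - L ≤ (1 + L) * s := by nlinarith [(abs_le_of_sq_le_sq' hquad hpos.le).1]
  rw [le_div_iff₀ (by positivity)]
  nlinarith [pow_le_pow_left₀ (by linarith) hs 2]

theorem gao_quantum_union_bound_pure (ψ : E) (hψ : ‖ψ‖ = 1) (l : List (E →ₗ[𝕜] E))
    (hl : ∀ P ∈ l, P.IsSymmetricProjection) (hL : measurementLoss ψ l ≤ 1) :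
    1 - ‖l.reverse.prod ψ‖ ^ 2 ≤ 4 * measurementLoss ψ l / (1 + measurementLoss ψ l) ^ 2 := by
  have hL0 := measurementLoss_nonneg ψ l
  refine one_sub_sq_le_of_le_two_mul_sub hL0 hL ?_
  have hcs := re_inner_le_norm (𝕜 := 𝕜) ψ (l.reverse.prod ψ)
  rw [hψ, one_mul] at hcs
  linarith [gao_potential_le ψ hψ (by linarith : 0 < (1 + measurementLoss ψ l) / 2) l hl]

end PureState

namespace Matrix

variable {𝕜 l m n : Type*} [RCLike 𝕜]

noncomputable def toEuclideanSpace : Matrix m n 𝕜 ≃ₗ[𝕜] EuclideanSpace 𝕜 (m × n) :=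
  (LinearEquiv.curry 𝕜 𝕜 m n).symm.trans (WithLp.linearEquiv 2 𝕜 (m × n → 𝕜)).symm

@[simp] lemma toEuclideanSpace_apply (X : Matrix m n 𝕜) (p : m × n) :
    toEuclideanSpace X p = X p.1 p.2 := rfl

variable [Fintype m] [Fintype n]

lemma inner_toEuclideanSpace (X Y : Matrix m n 𝕜) :
    ⟪toEuclideanSpace X, toEuclideanSpace Y⟫_𝕜 = (Xᴴ * Y).trace := by
  simp [PiLp.inner_apply, trace, mul_apply, Fintype.sum_prod_type, Finset.sum_comm (γ := m),
    mul_comm]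

lemma re_trace_mul_mul_conjTranspose [Fintype l] (X : Matrix l m 𝕜) (v : Matrix m n 𝕜) :
    re (X * (v * vᴴ) * Xᴴ).trace = ‖toEuclideanSpace (X * v)‖ ^ 2 := by
  rw [← inner_self_eq_norm_sq (𝕜 := 𝕜), inner_toEuclideanSpace, trace_mul_comm (X * v)ᴴ,
    conjTranspose_mul, Matrix.mul_assoc, Matrix.mul_assoc, Matrix.mul_assoc]

open scoped MatrixOrder in
lemma PosSemidef.exists_eq_mul_conjTranspose [DecidableEq n] {ρ : Matrix n n 𝕜}
    (hρ : ρ.PosSemidef) : ∃ v : Matrix n n 𝕜, ρ = v * vᴴ := by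
  obtain ⟨B, rfl⟩ := CStarAlgebra.nonneg_iff_eq_star_mul_self.mp hρ.nonneg
  exact ⟨Bᴴ, by rw [conjTranspose_conjTranspose, star_eq_conjTranspose]⟩

variable [DecidableEq n]

noncomputable def leftMulEuclidean : Matrix n n 𝕜 →ₐ[𝕜] Module.End 𝕜 (EuclideanSpace 𝕜 (n × n)) :=
  (toEuclideanSpace.conjAlgEquiv 𝕜).toAlgHom.comp (Algebra.lmul 𝕜 (Matrix n n 𝕜))

@[simp] lemma leftMulEuclidean_apply (A X : Matrix n n 𝕜) :
    leftMulEuclidean A (toEuclideanSpace X) = toEuclideanSpace (A * X) := by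
  simp [leftMulEuclidean, LinearEquiv.conjAlgEquiv_apply]

lemma isSymmetricProjection_leftMulEuclidean {A : Matrix n n 𝕜} (hA : A.IsHermitian)
    (hAA : IsIdempotentElem A) : (leftMulEuclidean A).IsSymmetricProjection where
  isIdempotentElem := hAA.map leftMulEuclidean
  isSymmetric x y := by
    obtain ⟨X, rfl⟩ := toEuclideanSpace.surjective x
    obtain ⟨Y, rfl⟩ := toEuclideanSpace.surjective y
    simp only [leftMulEuclidean_apply, inner_toEuclideanSpace, conjTranspose_mul, hA.eq,
      Matrix.mul_assoc]

lemma re_trace_mul_one_sub {A : Matrix n n 𝕜} (hA : A.IsHermitian) (hAA : IsIdempotentElem A)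
    (v : Matrix n n 𝕜) :
    re (v * vᴴ * (1 - A)).trace =
      ‖toEuclideanSpace v - leftMulEuclidean A (toEuclideanSpace v)‖ ^ 2 := by
  have hQ : (1 - A)ᴴ = 1 - A := (isHermitian_one.sub hA).eq
  have hsub : toEuclideanSpace v - leftMulEuclidean A (toEuclideanSpace v) =
      toEuclideanSpace ((1 - A) * v) := by
    rw [leftMulEuclidean_apply, ← map_sub, Matrix.sub_mul, Matrix.one_mul]
  have hcycle :
      ((1 - A) * (v * vᴴ) * (1 - A)).trace = (v * vᴴ * ((1 - A) * (1 - A))).trace := by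
    rw [Matrix.mul_assoc, trace_mul_comm, Matrix.mul_assoc]
  rw [hsub, ← re_trace_mul_mul_conjTranspose, hQ, hcycle, hAA.one_sub.eq]

end Matrix

theorem gao_quantum_union_bound_general
    {d m : ℕ} (ρ : Matrix (Fin d) (Fin d) ℂ)
    (hρ : ρ.PosSemidef) (hρ1 : ρ.trace = 1)
    (A : Fin m → Matrix (Fin d) (Fin d) ℂ)
    (hAherm : ∀ t, (A t).IsHermitian) (hAproj : ∀ t, A t * A t = A t)
    (ε : Fin m → ℝ) (hε : ∀ t, ε t = ((ρ * (1 - A t)).trace).re)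
    (Succ Fail Loss : ℝ)
    (hSucc : Succ = ((((List.ofFn A).reverse.prod) * ρ * ((List.ofFn A).reverse.prod)ᴴ).trace).re)
    (hFail : Fail = 1 - Succ)
    (hLoss : Loss = ∑ t, ε t)
    (hL1 : Loss ≤ 1) :
    Fail ≤ 4 * Loss / (1 + Loss) ^ 2 ∧ 4 * Loss / (1 + Loss) ^ 2 ≤ 4 * Loss := by
  obtain ⟨v, rfl⟩ := hρ.exists_eq_mul_conjTranspose
  have hψ : ‖toEuclideanSpace v‖ = 1 := by
    have h := re_trace_mul_mul_conjTranspose (1 : Matrix (Fin d) (Fin d) ℂ) v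
    simp only [Matrix.one_mul, conjTranspose_one, Matrix.mul_one, hρ1, one_re] at h
    exact (pow_eq_one_iff_of_nonneg (norm_nonneg _) two_ne_zero).mp h.symm
  set ψ := toEuclideanSpace v
  set l := List.ofFn fun t => leftMulEuclidean (A t)
  have hl : ∀ P ∈ l, P.IsSymmetricProjection := by
    simpa [l, List.mem_ofFn] using
      fun t => isSymmetricProjection_leftMulEuclidean (hAherm t) (hAproj t)
  have hSucc' : Succ = ‖l.reverse.prod ψ‖ ^ 2 := by
    have hprod : l.reverse.prod = leftMulEuclidean (List.ofFn A).reverse.prod := by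
      rw [map_list_prod, List.map_reverse, List.map_ofFn]
      rfl
    rw [hSucc, hprod, leftMulEuclidean_apply]
    exact re_trace_mul_mul_conjTranspose _ v
  have hLoss' : Loss = measurementLoss ψ l := by
    rw [hLoss, measurementLoss, List.map_ofFn, List.sum_ofFn]
    exact Finset.sum_congr rfl fun t _ =>
      (hε t).trans (re_trace_mul_one_sub (hAherm t) (hAproj t) v)
  have hL0 : 0 ≤ Loss := hLoss' ▸ measurementLoss_nonneg ψ l
  refine ⟨?_, div_le_self (by positivity) (by nlinarith)⟩
  rw [hFail, hSucc', hLoss']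
  exact gao_quantum_union_bound_pure ψ hψ l hl (hLoss' ▸ hL1)

/-- Gao'\''s Quantum Union Bound: Fail ≤ 4·Loss/(1+Loss)² ≤ 4·Loss. -/
theorem gao_quantum_union_bound
    {d m : ℕ} (ρ : Matrix (Fin d) (Fin d) ℂ)
    (hρ : ρ.PosSemidef) (hρ1 : ρ.trace = 1)
    (A : Fin m → Matrix (Fin d) (Fin d) ℂ)
    (hAherm : ∀ t, (A t).IsHermitian) (hAproj : ∀ t, A t * A t = A t)
    (ε : Fin m → ℝ) (hε : ∀ t, ε t = ((ρ * (1 - A t)).trace).re)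
    (ρseq : Fin (m + 1) → Matrix (Fin d) (Fin d) ℂ)
    (h0 : ρseq 0 = ρ)
    (hprob : ∀ t : Fin m, 0 < ((ρseq t.castSucc * A t).trace).re)
    (hrec : ∀ t : Fin m, ρseq t.succ =
      ((ρseq t.castSucc * A t).trace)⁻¹ • (A t * ρseq t.castSucc * A t))
    (Succ Fail Loss : ℝ)
    (hSucc : Succ = ((((List.ofFn A).reverse.prod) * ρ * ((List.ofFn A).reverse.prod)ᴴ).trace).re)
    (hFail : Fail = 1 - Succ)
    (hLoss : Loss = ∑ t, ε t)
    (hL1 : Loss ≤ 1) :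
    Fail ≤ 4 * Loss / (1 + Loss) ^ 2 ∧ 4 * Loss / (1 + Loss) ^ 2 ≤ 4 * Loss :=
  gao_quantum_union_bound_general ρ hρ hρ1 A hAherm hAproj ε hε Succ Fail Loss hSucc hFail hLoss hL1
end
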